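/- Let N and C be positive natural numbers, let be an N×N real row-stochastic matrix (all entries nonnegative, every row sums to 1), and let Z be an N×C one-hot label matrix (every row is a standard basis vector of ℝ^C). Then for any two indices v, u with the same label (row v of Z equals row u of Z), the entry of S(I−Â,Z) = (I−Â)ZZᵀ(I−Â)ᵀ at position (v,u) is ≥ 0. -/

import Mathlib

/-!
Write `M = (I - Â)Z`, so that `S(I - Â, Z) = M Mᵀ` and `M v k = Z v k - (ÂZ) v k`. Each `(ÂZ) v k`
is a convex combination of entries of `Z`, hence lies in `[0, 1]`; so `M v k ≥ 0` when
`Z v k = 1` and `M v k ≤ 0` when `Z v k = 0`. Two nodes with the same label therefore give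
entries of the same sign in every column, and `(M Mᵀ) v u = ∑ₖ M v k * M u k` is a sum of
nonnegative terms.
-/

open Matrix Finset

section

variable {R n : Type*} [Fintype n] [DecidableEq n]

lemma Matrix.mulVec_le_one_of_mem_rowStochastic [Semiring R] [PartialOrder R]
    [IsOrderedRing R] {A : Matrix n n R} (hA : A ∈ rowStochastic R n) {x : n → R}
    (hx : ∀ i, x i ≤ 1) (j : n) : (A *ᵥ x) j ≤ 1 :=
  calc (A *ᵥ x) j = ∑ i, A j i * x i := rfl
    _ ≤ ∑ i, A j i := sum_le_sum fun i _ =>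
        mul_le_of_le_one_right (nonneg_of_mem_rowStochastic hA) (hx i)
    _ = 1 := sum_row_of_mem_rowStochastic hA j

variable [CommRing R] [LinearOrder R] [IsStrictOrderedRing R]

lemma sub_mul_sub_nonneg_of_eq_zero_or_eq_one {z s t : R} (hz : z = 0 ∨ z = 1)
    (hs : s ∈ Set.Icc 0 1) (ht : t ∈ Set.Icc 0 1) : 0 ≤ (z - s) * (z - t) := by
  rcases hz with rfl | rfl
  · simpa using mul_nonneg hs.1 ht.1
  · exact mul_nonneg (sub_nonneg.2 hs.2) (sub_nonneg.2 ht.2)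

lemma Matrix.mul_apply_mem_Icc_of_mem_rowStochastic {m : Type*} {A : Matrix n n R}
    (hA : A ∈ rowStochastic R n) {Z : Matrix n m R} (hZ : ∀ i k, Z i k ∈ Set.Icc 0 1)
    (w : n) (k : m) : (A * Z) w k ∈ Set.Icc 0 1 :=
  ⟨nonneg_mulVec_of_mem_rowStochastic hA (fun i => (hZ i k).1) w,
    mulVec_le_one_of_mem_rowStochastic hA (fun i => (hZ i k).2) w⟩

theorem Matrix.highPass_similarity_nonneg_of_row_eq {m : Type*} [Fintype m]
    {A : Matrix n n R} (hA : A ∈ rowStochastic R n) {Z : Matrix n m R}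
    (hZ : ∀ i k, Z i k = 0 ∨ Z i k = 1) {v u : n} (hvu : Z v = Z u) :
    0 ≤ ((1 - A) * Z * Zᵀ * (1 - A)ᵀ : Matrix n n R) v u := by
  have hZ_Icc : ∀ i k, Z i k ∈ Set.Icc (0 : R) 1 := fun i k => by
    rcases hZ i k with h | h <;> simp [h]
  have hM : ∀ w k, ((1 - A) * Z : Matrix n m R) w k = Z w k - (A * Z) w k := fun w k => by
    rw [Matrix.sub_mul, Matrix.one_mul, sub_apply]
  rw [Matrix.mul_assoc ((1 - A) * Z), ← transpose_mul, mul_apply]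
  refine sum_nonneg fun k _ => ?_
  rw [transpose_apply, hM, hM, ← congrFun hvu k]
  exact sub_mul_sub_nonneg_of_eq_zero_or_eq_one (hZ v k)
    (mul_apply_mem_Icc_of_mem_rowStochastic hA hZ_Icc v k)
    (mul_apply_mem_Icc_of_mem_rowStochastic hA hZ_Icc u k)

end

theorem stmt_1_general (N C : ℕ)
    (A : Matrix (Fin N) (Fin N) ℝ)
    (hA_nonneg : ∀ i j, 0 ≤ A i j)
    (hA_rowsum : ∀ i, ∑ j, A i j = 1)
    (Z : Matrix (Fin N) (Fin C) ℝ)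
    (hZ : ∀ v, ∃ k : Fin C, ∀ c, Z v c = if c = k then 1 else 0)
    (v u : Fin N) (hvu : Z v = Z u) :
    0 ≤ ((1 - A) * Z * Zᵀ * (1 - A)ᵀ : Matrix (Fin N) (Fin N) ℝ) v u := by
  have hZ01 : ∀ i c, Z i c = 0 ∨ Z i c = 1 := fun i c => by
    obtain ⟨k, hk⟩ := hZ i
    rw [hk]
    split_ifs <;> simp
  exact highPass_similarity_nonneg_of_row_eq
    (mem_rowStochastic_iff_sum.2 ⟨hA_nonneg, hA_rowsum⟩) hZ01 hvu

/-- For a row-stochastic `Â` and a one-hot label matrix `Z` with `C` classes, the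
post-diversification similarity `S(I−Â,Z) = (I−Â)ZZᵀ(I−Â)ᵀ` is nonnegative at any
pair of same-labeled nodes. -/
theorem stmt_1 (N C : ℕ) (hN : 0 < N) (hC : 0 < C)
    (A : Matrix (Fin N) (Fin N) ℝ)
    (hA_nonneg : ∀ i j, 0 ≤ A i j)
    (hA_rowsum : ∀ i, ∑ j, A i j = 1)
    (Z : Matrix (Fin N) (Fin C) ℝ)
    (hZ : ∀ v, ∃ k : Fin C, ∀ c, Z v c = if c = k then 1 else 0)
    (v u : Fin N) (hvu : Z v = Z u) :
    0 ≤ ((1 - A) * Z * Zᵀ * (1 - A)ᵀ : Matrix (Fin N) (Fin N) ℝ) v u :=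
  stmt_1_general N C A hA_nonneg hA_rowsum Z hZ v u hvu
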